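/- arXiv:2507.10982 — 4 statements merged into one kernel-verified Lean document; each statement's English description precedes it below -/
import Mathlib

section
/- Let τ > 1 be irrational, η ∈ ℝ, and set τ' = 1/τ and η' = (1 − η)/τ. For every positive integer x, there exists an integer k with x = ⌊τk + η⌋ if and only if 0 < {xτ' + η'} ≤ τ', where {·} denotes the fractional part. -/
/-!
Since `τ > 0`, `x = ⌊τ k + η⌋` says exactly that `k` lies in `[t - 1/τ, t)` with
`t = (x + 1 - η)/τ = x τ' + η'`. As `1/τ < 1`, this half-open interval of length `1/τ`
contains an integer iff `⌊t⌋` lies in it and differs from `t`, i.e. iff `0 < {t} ≤ 1/τ`.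
-/

section

variable {α : Type*} [Field α] [LinearOrder α] [IsStrictOrderedRing α] [FloorRing α]

theorem Int.floor_mul_add_eq_iff {τ : α} (hτ : 0 < τ) (η : α) (k x : ℤ) :
    ⌊τ * k + η⌋ = x ↔ (k : α) ∈ Set.Ico ((x - η) / τ) ((x + 1 - η) / τ) := by
  rw [Int.floor_eq_iff, Set.mem_Ico, div_le_iff₀ hτ, lt_div_iff₀ hτ]
  constructor <;> rintro ⟨h₁, h₂⟩ <;> constructor <;> linarith

theorem Int.exists_mem_Ico_sub_iff_fract {c : α} (hc : c < 1) (t : α) :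
    (∃ k : ℤ, (k : α) ∈ Set.Ico (t - c) t) ↔ 0 < Int.fract t ∧ Int.fract t ≤ c := by
  rw [Int.fract]
  constructor
  · rintro ⟨k, hk_lo, hk_hi⟩
    have hfloor : ⌊t⌋ = k := by
      rw [Int.floor_eq_iff]
      constructor <;> linarith
    rw [hfloor]
    constructor <;> linarith
  · rintro ⟨hpos, hle⟩
    exact ⟨⌊t⌋, by linarith, by linarith⟩

end

theorem beatty_mem_iff_fract_general (τ η : ℝ) (hτ : 1 < τ)
    (x : ℕ) :
    (∃ k : ℤ, (x : ℤ) = ⌊τ * (k : ℝ) + η⌋) ↔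
      (0 < Int.fract ((x : ℝ) * (1 / τ) + (1 - η) / τ) ∧
        Int.fract ((x : ℝ) * (1 / τ) + (1 - η) / τ) ≤ 1 / τ) := by
  have hτ₀ : 0 < τ := one_pos.trans hτ
  have ht : (x : ℝ) * (1 / τ) + (1 - η) / τ = (x + 1 - η) / τ := by ring
  have ht' : ((x : ℝ) - η) / τ = (x + 1 - η) / τ - 1 / τ := by ring
  rw [ht, ← Int.exists_mem_Ico_sub_iff_fract ((div_lt_one hτ₀).2 hτ)]
  simp only [eq_comm (a := (x : ℤ)), Int.floor_mul_add_eq_iff hτ₀, Int.cast_natCast, ht']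

/-- Let `τ > 1` be irrational, `η ∈ ℝ`, and set `τ' = 1/τ`,
`η' = (1 − η)/τ`.  For every positive integer `x`, there exists an integer `k` with
`x = ⌊τk + η⌋` if and only if `0 < {xτ' + η'} ≤ τ'`, where `{·}` is the fractional part. -/
theorem beatty_mem_iff_fract (τ η : ℝ) (hτ : 1 < τ) (hirr : Irrational τ)
    (x : ℕ) (hx : 0 < x) :
    (∃ k : ℤ, (x : ℤ) = ⌊τ * (k : ℝ) + η⌋) ↔
      (0 < Int.fract ((x : ℝ) * (1 / τ) + (1 - η) / τ) ∧
        Int.fract ((x : ℝ) * (1 / τ) + (1 - η) / τ) ≤ 1 / τ) :=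
  beatty_mem_iff_fract_general τ η hτ x
end

section
/- Let τ ≥ 1 be a real number and η ∈ ℝ. Then the limit, as n₂ − n₁ → ∞ over intervals [n₁,n₂] of positive integers, of |S(τ,η) ∩ [n₁,n₂]| / (n₂ − n₁) exists and equals 1/τ. In other words, the Beatty set S(τ,η) has (Banach) density 1/τ in the positive integers. -/
open scoped BigOperators

noncomputable section

/-- The Beatty set `S(τ,η) = {⌊τk+η⌋ : k ∈ ℕ} ∩ ℕ`, viewed as a set of positive integers
(inside `ℤ`).  Here `ℕ` denotes the positive integers, so `k` ranges over `k ≥ 1`. -/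
def BeattySet (τ η : ℝ) : Set ℤ :=
  {x : ℤ | 0 < x ∧ ∃ k : ℕ, 0 < k ∧ ⌊τ * (k : ℝ) + η⌋ = x}

/-- The sets `A_i` (for `1 ≤ i < ∞`) associated to the data `(α,β,γ,δ)` and the map `f`
(which satisfies `f(⌊αk+β⌋) = ⌊γk+δ⌋` for `k ≥ 1`):
`A_1 = ℕ \ (S(α,β) ∪ S(γ,δ))`, and for `i ≥ 2`,
`A_i = {x ∈ S(α,β) \ S(γ,δ) : f^j(x) ∈ S(α,β) ∩ S(γ,δ) for 1 ≤ j ≤ i−2, and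
f^{i−1}(x) ∈ S(γ,δ) \ S(α,β)}`. -/
def ASet (α β γ δ : ℝ) (f : ℤ → ℤ) (i : ℕ) : Set ℤ :=
  if i = 1 then {x : ℤ | 0 < x} \ (BeattySet α β ∪ BeattySet γ δ)
  else (BeattySet α β \ BeattySet γ δ) ∩
    {x : ℤ | (∀ j : ℕ, 1 ≤ j → j ≤ i - 2 → f^[j] x ∈ BeattySet α β ∩ BeattySet γ δ) ∧
      f^[i - 1] x ∈ BeattySet γ δ \ BeattySet α β}

/-- The set `A_∞ = {x ∈ S(α,β) \ S(γ,δ) : f^j(x) ∈ S(α,β) ∩ S(γ,δ) for all j ≥ 1}`. -/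
def AInf (α β γ δ : ℝ) (f : ℤ → ℤ) : Set ℤ :=
  (BeattySet α β \ BeattySet γ δ) ∩
    {x : ℤ | ∀ j : ℕ, 1 ≤ j → f^[j] x ∈ BeattySet α β ∩ BeattySet γ δ}

/-- `A` has (Banach) density `d`: the limit of `|A ∩ [n₁,n₂]| / (n₂ − n₁)` as `n₂ − n₁ → ∞`
over intervals `[n₁,n₂]` of positive integers exists and equals `d`. -/
def HasBanachDensity (A : Set ℤ) (d : ℝ) : Prop :=
  ∀ ε : ℝ, 0 < ε → ∃ N : ℕ, ∀ n₁ n₂ : ℕ, 0 < n₁ → n₁ + N ≤ n₂ →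
    |((A ∩ Set.Icc (n₁ : ℤ) (n₂ : ℤ)).ncard : ℝ) / ((n₂ : ℝ) - (n₁ : ℝ)) - d| < ε

end

-- strict mono
lemma beatty_mono (τ η : ℝ) (hτ : 1 ≤ τ) : StrictMono (fun k : ℤ => ⌊τ * (k:ℝ) + η⌋) := by
  intro k k' hk
  have h1 : τ * (k:ℝ) + η + 1 ≤ τ * (k':ℝ) + η := by
    have : (k:ℝ) + 1 ≤ (k':ℝ) := by exact_mod_cast hk
    nlinarith [mul_le_mul_of_nonneg_left this (le_trans zero_le_one hτ)]
  calc ⌊τ * (k:ℝ) + η⌋ < ⌊τ * (k:ℝ) + η⌋ + 1 := lt_add_one _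
    _ = ⌊τ * (k:ℝ) + η + 1⌋ := by rw [Int.floor_add_one]
    _ ≤ ⌊τ * (k':ℝ) + η⌋ := Int.floor_le_floor h1

lemma beatty_inter (τ η : ℝ) (hτ : 1 ≤ τ) (n₁ n₂ : ℤ) (h1 : 1 ≤ n₁) :
    BeattySet τ η ∩ Set.Icc n₁ n₂ =
      (fun k : ℤ => ⌊τ * (k:ℝ) + η⌋) ''
        Set.Ico (max 1 ⌈((n₁:ℝ) - η)/τ⌉) ⌈((n₂:ℝ) + 1 - η)/τ⌉ := by
  have hτ0 : (0:ℝ) < τ := lt_of_lt_of_le one_pos hτ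
  ext x
  simp only [Set.mem_inter_iff, Set.mem_Icc, Set.mem_image, Set.mem_Ico, BeattySet,
    Set.mem_setOf_eq]
  constructor
  · rintro ⟨⟨hx0, k, hk0, hk⟩, hxl, hxr⟩
    refine ⟨(k:ℤ), ⟨max_le (by exact_mod_cast hk0) ?_, ?_⟩, ?_⟩
    · rw [Int.ceil_le]
      rw [div_le_iff₀ hτ0]
      push_cast
      have h1' : ((n₁:ℤ):ℝ) ≤ ((x:ℤ):ℝ) := by exact_mod_cast hxl
      have h2' : ((x:ℤ):ℝ) ≤ τ * (k:ℝ) + η := by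
        have := Int.floor_le (τ * (k:ℝ) + η)
        rw [hk] at this; exact this
      linarith
    · rw [Int.lt_ceil, lt_div_iff₀ hτ0]
      push_cast
      have h2 : τ * (k:ℝ) + η < (x:ℝ) + 1 := by
        have := Int.lt_floor_add_one (τ * (k:ℝ) + η)
        rw [hk] at this; exact_mod_cast this
      have h3 : (x:ℝ) ≤ (n₂:ℝ) := by exact_mod_cast hxr
      linarith
    · push_cast; exact hk
  · rintro ⟨k, ⟨hkl, hkr⟩, hk⟩
    have hk1 : 1 ≤ k := le_trans (le_max_left _ _) hkl
    have ha : ((n₁:ℝ) - η)/τ ≤ (k:ℝ) := by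
      have := le_trans (le_max_right _ _) hkl
      exact_mod_cast le_trans (Int.le_ceil _) (by exact_mod_cast this)
    have hl : (n₁:ℝ) ≤ τ * (k:ℝ) + η := by
      rw [div_le_iff₀ hτ0] at ha; linarith
    have hxl : n₁ ≤ ⌊τ * (k:ℝ) + η⌋ := Int.le_floor.2 hl
    have hb : (k:ℝ) < ((n₂:ℝ) + 1 - η)/τ := by exact_mod_cast Int.lt_ceil.1 hkr
    have hr : τ * (k:ℝ) + η < (n₂:ℝ) + 1 := by
      rw [lt_div_iff₀ hτ0] at hb; linarith
    have hxr : ⌊τ * (k:ℝ) + η⌋ ≤ n₂ := by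
      have : ⌊τ * (k:ℝ) + η⌋ < n₂ + 1 := Int.floor_lt.2 (by push_cast; linarith)
      omega
    refine ⟨⟨lt_of_lt_of_le h1 (hk ▸ hxl), k.toNat, by omega, ?_⟩, hk ▸ hxl, hk ▸ hxr⟩
    rw [← hk]
    have hcast : ((k.toNat : ℕ) : ℝ) = ((k:ℤ) : ℝ) := by
      exact_mod_cast Int.toNat_of_nonneg (by omega : (0:ℤ) ≤ k)
    rw [hcast]

lemma div_abs_bound (τ x B : ℝ) (hτ : 1 ≤ τ) (h : |x| ≤ B) : |x / τ| ≤ B := by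
  have hτ0 : (0:ℝ) < τ := lt_of_lt_of_le one_pos hτ
  rw [abs_div, abs_of_pos hτ0]
  calc |x| / τ ≤ |x| := div_le_self (abs_nonneg x) hτ
    _ ≤ B := h

theorem beatty_count (τ η : ℝ) (hτ : 1 ≤ τ) (n₁ n₂ : ℤ) (h1 : 1 ≤ n₁) :
    ((BeattySet τ η ∩ Set.Icc n₁ n₂).ncard : ℤ) =
      (⌈((n₂:ℝ) + 1 - η)/τ⌉ - max 1 ⌈((n₁:ℝ) - η)/τ⌉).toNat := by
  rw [beatty_inter τ η hτ n₁ n₂ h1,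
    Set.ncard_image_of_injOn ((beatty_mono τ η hτ).injective.injOn),
    ← Finset.coe_Ico, Set.ncard_coe_finset, Int.card_Ico]

set_option maxHeartbeats 1000000 in
theorem beatty_density_aux (τ η : ℝ) (hτ : 1 ≤ τ) :
    ∀ ε : ℝ, 0 < ε → ∃ N : ℕ, ∀ n₁ n₂ : ℕ, 0 < n₁ → n₁ + N ≤ n₂ →
    |((BeattySet τ η ∩ Set.Icc (n₁ : ℤ) (n₂ : ℤ)).ncard : ℝ) / ((n₂ : ℝ) - (n₁ : ℝ)) - 1/τ| < ε := by
  intro ε hε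
  have hτ0 : (0:ℝ) < τ := lt_of_lt_of_le one_pos hτ
  set C : ℝ := 2 * |η| + 4 with hCdef
  have hC3 : 4 ≤ C := by have := abs_nonneg η; linarith
  obtain ⟨N, hN⟩ := exists_nat_gt (max (C/ε) (τ*C))
  refine ⟨N, fun n₁ n₂ hn1 hn2 => ?_⟩
  set M : ℝ := (n₂ : ℝ) - (n₁ : ℝ) with hMdef
  have hNM : (N:ℝ) ≤ M := by
    have : (n₁:ℝ) + (N:ℝ) ≤ (n₂:ℝ) := by exact_mod_cast hn2
    linarith
  have hMτC : τ * C < M := lt_of_le_of_lt (le_max_right _ _) (lt_of_lt_of_le hN hNM)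
  have hM0 : 0 < M := lt_trans (by nlinarith) hMτC
  have hMε : C < ε * M := by
    have h1 : C / ε < M := lt_of_le_of_lt (le_max_left _ _) (lt_of_lt_of_le hN hNM)
    rw [div_lt_iff₀ hε] at h1; linarith [h1]
  -- the count
  set a : ℤ := ⌈((n₁:ℝ) - η)/τ⌉ with hadef
  set b : ℤ := ⌈(((n₂:ℕ):ℝ) + 1 - η)/τ⌉ with hbdef
  set A : ℤ := max 1 a with hAdef
  have hcount : ((BeattySet τ η ∩ Set.Icc (n₁:ℤ) (n₂:ℤ)).ncard : ℤ) = (b - A).toNat := by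
    have := beatty_count τ η hτ (n₁:ℤ) (n₂:ℤ) (by exact_mod_cast hn1)
    rw [this]
    norm_num [hadef, hbdef, hAdef]
  -- bounds on b and a
  have hb1 : (((n₂:ℕ):ℝ) + 1 - η)/τ ≤ (b:ℝ) := Int.le_ceil _
  have hb2 : (b:ℝ) < (((n₂:ℕ):ℝ) + 1 - η)/τ + 1 := Int.ceil_lt_add_one _
  have key : |((b - A : ℤ) : ℝ) - M/τ| ≤ C := by
    rcases le_or_gt 1 a with ha1 | ha1
    · have hA : A = a := max_eq_right ha1
      have ha2 : (((n₁:ℕ):ℝ) - η)/τ ≤ (a:ℝ) := Int.le_ceil _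
      have ha3 : (a:ℝ) < (((n₁:ℕ):ℝ) - η)/τ + 1 := Int.ceil_lt_add_one _
      rw [hA]
      have e1 : (((n₂:ℕ):ℝ) + 1 - η)/τ - ((((n₁:ℕ):ℝ) - η)/τ) = (M + 1)/τ := by
        rw [hMdef]; field_simp; ring
      have h1τ : 1/τ ≤ 1 := by
        rw [div_le_one hτ0]; exact hτ
      have h1τ0 : 0 < 1/τ := by positivity
      rw [abs_le]
      push_cast
      constructor
      · have : (M+1)/τ = M/τ + 1/τ := by ring
        nlinarith [this]
      · have : (M+1)/τ = M/τ + 1/τ := by ring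
        nlinarith [this]
    · -- a ≤ 0, so n₁ ≤ η
      have hA : A = 1 := max_eq_left (by omega)
      have ha2 : ((((n₁:ℕ):ℝ) - η)/τ) ≤ (a:ℝ) := Int.le_ceil _
      have ha0 : (a:ℝ) ≤ 0 := by exact_mod_cast (by omega : a ≤ 0)
      have hn1η : ((n₁:ℕ):ℝ) ≤ η := by
        have := le_trans ha2 ha0
        rw [div_nonpos_iff] at this
        rcases this with ⟨h,_⟩|⟨h,_⟩
        · linarith
        · linarith
      have hx : |((n₁:ℕ):ℝ) + 1 - η| ≤ 2*|η| + 1 := by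
        rw [abs_le]
        have h1 : (1:ℝ) ≤ ((n₁:ℕ):ℝ) := by exact_mod_cast hn1
        have h2 : η ≤ |η| := le_abs_self η
        have h3 : -|η| ≤ η := neg_abs_le η
        constructor <;> nlinarith
      have hxd : |(((n₁:ℕ):ℝ) + 1 - η)/τ| ≤ 2*|η| + 1 := div_abs_bound τ _ _ hτ hx
      rw [abs_le] at hxd
      have e1 : (((n₂:ℕ):ℝ) + 1 - η)/τ = M/τ + ((((n₁:ℕ):ℝ) + 1 - η)/τ) := by
        rw [hMdef]; field_simp; ring
      rw [hA, abs_le]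
      push_cast
      constructor <;> nlinarith [hb1, hb2, e1]
  -- conclude
  have hbA0 : (0:ℝ) < ((b - A : ℤ) : ℝ) := by
    have hMC : C < M/τ := by
      rw [lt_div_iff₀ hτ0]; nlinarith
    have := (abs_le.1 key).1
    linarith
  have htn : (((b - A).toNat : ℕ) : ℝ) = ((b - A : ℤ) : ℝ) := by
    have : (0:ℤ) ≤ b - A := by exact_mod_cast hbA0.le
    exact_mod_cast Int.toNat_of_nonneg this
  have hcR : (((BeattySet τ η ∩ Set.Icc (n₁:ℤ) (n₂:ℤ)).ncard : ℕ) : ℝ) = ((b - A : ℤ) : ℝ) := by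
    rw [← htn]; exact_mod_cast hcount
  rw [hcR]
  have heq : ((b - A : ℤ) : ℝ) / M - 1/τ = (((b - A : ℤ) : ℝ) - M/τ) / M := by
    field_simp
  rw [heq, abs_div, abs_of_pos hM0]
  rw [div_lt_iff₀ hM0]
  calc |((b - A : ℤ) : ℝ) - M/τ| ≤ C := key
    _ < ε * M := hMε

/-- For `τ ≥ 1` and `η ∈ ℝ`, the Beatty set `S(τ,η)` has (Banach)
density `1/τ` in the positive integers. -/
theorem beatty_set_density (τ η : ℝ) (hτ : 1 ≤ τ) :
    HasBanachDensity (BeattySet τ η) (1 / τ) :=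
  beatty_density_aux τ η hτ
end

section
/- Suppose α = 1 and γ > 1 (β, δ ∈ ℝ arbitrary). Then the set A_1 is finite (indeed |A_1| ≤ |β| + 1), and for every integer i with 2 ≤ i < ∞ the set A_i is finite. -/
/-!
For `α = 1` the Beatty set `S(1, β)` is all integers above `max 0 ⌊β⌋`, so its complement in `ℕ`,
and with it `A_1` and `S(γ, δ) ∖ S(1, β)`, lies in `[1, ⌊β⌋]`. On `S(1, β)` the map `f` agrees with
the strictly increasing map `g n = ⌊γ n + δ - γ ⌊β⌋⌋`, and every point of `A_i` stays in `S(1, β)`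
for its first `i - 1` steps, so `A_i` lies in the preimage of the finite set `S(γ, δ) ∖ S(1, β)`
under the injective map `g^[i-1]`.
-/

open scoped BigOperators

theorem Function.iterate_apply_eq_of_eqOn {α : Type*} {f g : α → α} {s : Set α}
    (hfg : Set.EqOn f g s) {n : ℕ} {x : α} (hx : ∀ j < n, f^[j] x ∈ s) :
    f^[n] x = g^[n] x := by
  induction n with
  | zero => rfl
  | succ n ih =>
    rw [Function.iterate_succ_apply', Function.iterate_succ_apply',
      ← ih fun j hj => hx j (by omega), hfg (hx n n.lt_succ_self)]

theorem strictMono_floor_mul_add {γ : ℝ} (hγ : 1 ≤ γ) (δ : ℝ) :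
    StrictMono fun n : ℤ => ⌊γ * n + δ⌋ := by
  intro m n hmn
  have hstep : γ * m + δ + 1 ≤ γ * n + δ := by
    have : (m : ℝ) + 1 ≤ n := by exact_mod_cast hmn
    nlinarith
  calc ⌊γ * m + δ⌋ < ⌊γ * m + δ⌋ + 1 := Int.lt_succ _
    _ = ⌊γ * m + δ + 1⌋ := (Int.floor_add_one _).symm
    _ ≤ ⌊γ * n + δ⌋ := Int.floor_le_floor hstep

theorem mem_beattySet_one_iff (β : ℝ) (x : ℤ) :
    x ∈ BeattySet 1 β ↔ 0 < x ∧ ⌊β⌋ < x := by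
  constructor
  · rintro ⟨hx, k, hk, rfl⟩
    refine ⟨hx, ?_⟩
    rw [one_mul, ← Int.cast_natCast, Int.floor_intCast_add]
    omega
  · rintro ⟨hx, hβx⟩
    refine ⟨hx, (x - ⌊β⌋).toNat, by omega, ?_⟩
    rw [one_mul, ← Int.cast_natCast, Int.toNat_of_nonneg (by omega), Int.floor_intCast_add]
    omega

theorem pos_notMem_beattySet_one_subset_Icc (β : ℝ) :
    {x : ℤ | 0 < x} \ BeattySet 1 β ⊆ Set.Icc 1 ⌊β⌋ := by
  rintro x ⟨hx : 0 < x, hxβ⟩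
  rw [mem_beattySet_one_iff] at hxβ
  exact ⟨hx, by omega⟩

theorem ncard_Icc_one_floor_le (β : ℝ) : ((Set.Icc (1 : ℤ) ⌊β⌋).ncard : ℝ) ≤ |β| + 1 := by
  rw [← Finset.coe_Icc, Set.ncard_coe_finset, Int.card_Icc, add_sub_cancel_right]
  rcases le_or_gt ⌊β⌋ 0 with hβ | hβ
  · rw [Int.toNat_of_nonpos hβ, Nat.cast_zero]
    positivity
  · have : ((⌊β⌋.toNat : ℤ) : ℝ) ≤ β := by
      rw [Int.toNat_of_nonneg hβ.le]
      exact Int.floor_le β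
    push_cast at this
    linarith [le_abs_self β]

theorem eqOn_beattySet_one {β γ δ : ℝ} {f : ℤ → ℤ}
    (hf : ∀ k : ℕ, 0 < k → f ⌊(1 : ℝ) * (k : ℝ) + β⌋ = ⌊γ * (k : ℝ) + δ⌋) :
    Set.EqOn f (fun n : ℤ => ⌊γ * n + (δ - γ * ⌊β⌋)⌋) (BeattySet 1 β) := by
  rintro x ⟨-, k, hk, rfl⟩
  rw [hf k hk, one_mul, ← Int.cast_natCast (R := ℝ) k, Int.floor_intCast_add]
  push_cast
  ring_nf

theorem ASet_subset_preimage_iterate {α β γ δ : ℝ} {f g : ℤ → ℤ}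
    (hfg : Set.EqOn f g (BeattySet α β)) {i : ℕ} (hi : 2 ≤ i) :
    ASet α β γ δ f i ⊆ g^[i - 1] ⁻¹' (BeattySet γ δ \ BeattySet α β) := by
  rintro x hx
  simp only [ASet, if_neg (show i ≠ 1 by omega)] at hx
  obtain ⟨⟨hx₀, -⟩, hmid, hlast⟩ := hx
  have horbit : ∀ j < i - 1, f^[j] x ∈ BeattySet α β := by
    rintro (_ | j) hj
    · exact hx₀
    · exact (hmid (j + 1) (by omega) (by omega)).1
  rw [Set.mem_preimage, ← Function.iterate_apply_eq_of_eqOn hfg horbit]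
  exact hlast

/-- Suppose `α = 1` and `γ > 1`.  Then `A_1` is finite, with
`|A_1| ≤ |β| + 1`, and for every integer `2 ≤ i < ∞` the set `A_i` is finite. -/
theorem ASet_finite_of_alpha_eq_one (β γ δ : ℝ) (hγ : 1 < γ) (f : ℤ → ℤ)
    (hf : ∀ k : ℕ, 0 < k → f ⌊(1 : ℝ) * (k : ℝ) + β⌋ = ⌊γ * (k : ℝ) + δ⌋) :
    ((ASet 1 β γ δ f 1).Finite ∧ ((ASet 1 β γ δ f 1).ncard : ℝ) ≤ |β| + 1) ∧
      ∀ i : ℕ, 2 ≤ i → (ASet 1 β γ δ f i).Finite := by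
  have hA₁ : ASet 1 β γ δ f 1 ⊆ Set.Icc 1 ⌊β⌋ := by
    rw [ASet, if_pos rfl]
    exact (Set.sdiff_subset_sdiff_right Set.subset_union_left).trans
      (pos_notMem_beattySet_one_subset_Icc β)
  refine ⟨⟨(Set.finite_Icc _ _).subset hA₁, ?_⟩, fun i hi => ?_⟩
  · calc ((ASet 1 β γ δ f 1).ncard : ℝ) ≤ (Set.Icc (1 : ℤ) ⌊β⌋).ncard := by
          exact_mod_cast Set.ncard_le_ncard hA₁ (Set.finite_Icc _ _)
      _ ≤ |β| + 1 := ncard_Icc_one_floor_le β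
  · have hfinite : (BeattySet γ δ \ BeattySet 1 β).Finite :=
      (Set.finite_Icc _ _).subset fun x hx =>
        pos_notMem_beattySet_one_subset_Icc β ⟨hx.1.1, hx.2⟩
    have hinj := (strictMono_floor_mul_add hγ.le (δ - γ * ⌊β⌋)).injective.iterate (i - 1)
    exact (hfinite.preimage hinj.injOn).subset
      (ASet_subset_preimage_iterate (eqOn_beattySet_one hf) hi)
end

section
/- Let 1 < p < q be integers and a, b ∈ ℤ with gcd(p,q) | (b − a), and write p = p₁·gcd(p,q), q = q₁·gcd(p,q). Suppose p₁ = 1 (i.e. p divides q). Applying the construction with (α,β,γ,δ) = (p,a,q,b), the densities d_i exist for all i ∈ ℕ ∪ {∞}, with d_1 = 1 − 1/p − 1/q + 1/(gcd(p,q)·p₁·q₁), d_i = 0 for every finite i ≥ 2, and d_∞ = (q₁ − 1)/(p·q₁). -/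
open scoped BigOperators

private lemma floor_nat_int (r : ℕ) (c : ℤ) (k : ℕ) :
    ⌊(r : ℝ) * (k : ℝ) + (c : ℝ)⌋ = (r : ℤ) * (k : ℤ) + c := by
  have h : (r : ℝ) * (k : ℝ) + (c : ℝ) = (((r : ℤ) * (k : ℤ) + c : ℤ) : ℝ) := by
    push_cast; ring
  rw [h, Int.floor_intCast]

lemma mem_beattySet_int {r : ℕ} (hr : 0 < r) (c : ℤ) (x : ℤ) :
    x ∈ BeattySet (r : ℝ) (c : ℝ) ↔ 0 < x ∧ (r : ℤ) ∣ x - c ∧ (r : ℤ) + c ≤ x := by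
  have hrz : (0 : ℤ) < (r : ℤ) := by exact_mod_cast hr
  constructor
  · rintro ⟨hx, k, hk, hfl⟩
    rw [floor_nat_int] at hfl
    have hk1 : (1 : ℤ) ≤ (k : ℤ) := by exact_mod_cast hk
    have hmul : (r : ℤ) * 1 ≤ (r : ℤ) * (k : ℤ) := by
      exact mul_le_mul_of_nonneg_left hk1 hrz.le
    exact ⟨hx, ⟨(k : ℤ), by linarith⟩, by linarith⟩
  · rintro ⟨hx, ⟨t, ht⟩, hge⟩
    have ht1 : 1 ≤ t := by
      by_contra h
      push_neg at h
      have : (r : ℤ) * t ≤ 0 := mul_nonpos_of_nonneg_of_nonpos hrz.le (by omega)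
      linarith
    refine ⟨hx, t.toNat, by omega, ?_⟩
    rw [floor_nat_int, Int.toNat_of_nonneg (by omega)]
    linarith

lemma ap_Ioc_ncard (r c m n : ℤ) (hr : 0 < r) (hmn : m ≤ n) :
    (({x : ℤ | r ∣ x - c} ∩ Set.Ioc m n).ncard : ℤ) = (n - c) / r - (m - c) / r := by
  have himg : {x : ℤ | r ∣ x - c} ∩ Set.Ioc m n
      = (fun t => c + r * t) '' Set.Ioc ((m - c) / r) ((n - c) / r) := by
    ext x
    simp only [Set.mem_inter_iff, Set.mem_setOf_eq, Set.mem_Ioc, Set.mem_image]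
    constructor
    · rintro ⟨⟨t, ht⟩, h1, h2⟩
      refine ⟨t, ⟨?_, ?_⟩, by linarith⟩
      · rw [Int.ediv_lt_iff_lt_mul hr]; linarith
      · rw [Int.le_ediv_iff_mul_le hr]; linarith
    · rintro ⟨t, ⟨h1, h2⟩, rfl⟩
      have h1' : m - c < t * r := (Int.ediv_lt_iff_lt_mul hr).mp h1
      have h2' : t * r ≤ n - c := (Int.le_ediv_iff_mul_le hr).mp h2
      exact ⟨⟨t, by ring⟩, by linarith, by linarith⟩
  have hinj : Function.Injective (fun t : ℤ => c + r * t) := by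
    intro t₁ t₂ h
    have h' : c + r * t₁ = c + r * t₂ := h
    exact mul_left_cancel₀ hr.ne' (by linarith)
  rw [himg, Set.ncard_image_of_injective _ hinj, ← Finset.coe_Ioc, Set.ncard_coe_finset,
    Int.card_Ioc]
  have hle : (m - c) / r ≤ (n - c) / r := Int.ediv_le_ediv hr (by omega)
  generalize (n - c) / r = u at *
  generalize (m - c) / r = v at *
  omega

lemma ap_Icc_ncard_est (r c n₁ n₂ : ℤ) (hr : 0 < r) (h : n₁ ≤ n₂) :
    |(({x : ℤ | r ∣ x - c} ∩ Set.Icc n₁ n₂).ncard : ℤ) * r - (n₂ - n₁)| ≤ 2 * r := by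
  have hIcc : Set.Icc n₁ n₂ = Set.Ioc (n₁ - 1) n₂ := by
    ext x; simp only [Set.mem_Icc, Set.mem_Ioc]; omega
  rw [hIcc, ap_Ioc_ncard r c _ _ hr (by omega)]
  have e2 := Int.mul_ediv_add_emod (n₂ - c) r
  have e1 := Int.mul_ediv_add_emod (n₁ - 1 - c) r
  have m2a := Int.emod_nonneg (n₂ - c) hr.ne'
  have m2b := Int.emod_lt_of_pos (n₂ - c) hr
  have m1a := Int.emod_nonneg (n₁ - 1 - c) hr.ne'
  have m1b := Int.emod_lt_of_pos (n₁ - 1 - c) hr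
  rw [abs_le]
  constructor <;> nlinarith [e1, e2, m1a, m1b, m2a, m2b]

lemma ap_Icc_est_real (r : ℕ) (hr : 0 < r) (c n₁ n₂ : ℤ) (h : n₁ ≤ n₂) :
    |(({x : ℤ | (r : ℤ) ∣ x - c} ∩ Set.Icc n₁ n₂).ncard : ℝ) - ((n₂ : ℝ) - (n₁ : ℝ)) / r| ≤ 2 := by
  have hrz : (0 : ℤ) < (r : ℤ) := by exact_mod_cast hr
  have key := ap_Icc_ncard_est (r : ℤ) c n₁ n₂ hrz h
  have hrR : (0 : ℝ) < (r : ℝ) := by exact_mod_cast hr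
  have key' : |(({x : ℤ | (r : ℤ) ∣ x - c} ∩ Set.Icc n₁ n₂).ncard : ℝ) * r
      - ((n₂ : ℝ) - (n₁ : ℝ))| ≤ 2 * r := by exact_mod_cast key
  have hdm : ((n₂ : ℝ) - (n₁ : ℝ)) / r * r = (n₂ : ℝ) - (n₁ : ℝ) :=
    div_mul_cancel₀ _ hrR.ne'
  rw [abs_le] at key' ⊢
  constructor <;> nlinarith [key'.1, key'.2]

lemma ncard_close_of_eventually_eq (A B : Set ℤ) (T : ℤ)
    (h : ∀ x : ℤ, T ≤ x → (x ∈ A ↔ x ∈ B)) (n₁ n₂ : ℤ) (h1 : 1 ≤ n₁) :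
    |((A ∩ Set.Icc n₁ n₂).ncard : ℤ) - ((B ∩ Set.Icc n₁ n₂).ncard : ℤ)|
      ≤ ((Set.Icc (1 : ℤ) (T - 1)).ncard : ℤ) := by
  have key : ∀ X Y : Set ℤ, (∀ x, T ≤ x → x ∈ X → x ∈ Y) →
      (X ∩ Set.Icc n₁ n₂).ncard ≤ (Y ∩ Set.Icc n₁ n₂).ncard + (Set.Icc (1:ℤ) (T-1)).ncard := by
    intro X Y hXY
    have hsub : X ∩ Set.Icc n₁ n₂ ⊆ (Y ∩ Set.Icc n₁ n₂) ∪ Set.Icc 1 (T - 1) := by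
      rintro x ⟨hxX, hx⟩
      rcases le_or_gt T x with hT | hT
      · exact Or.inl ⟨hXY x hT hxX, hx⟩
      · exact Or.inr ⟨le_trans h1 hx.1, by omega⟩
    calc (X ∩ Set.Icc n₁ n₂).ncard
        ≤ ((Y ∩ Set.Icc n₁ n₂) ∪ Set.Icc 1 (T-1)).ncard :=
          Set.ncard_le_ncard hsub
            (((Set.finite_Icc _ _).inter_of_right _).union (Set.finite_Icc _ _))
      _ ≤ _ := Set.ncard_union_le _ _
  have h1' := key A B (fun x hx => (h x hx).mp)
  have h2' := key B A (fun x hx => (h x hx).mpr)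
  rw [abs_le]
  omega


lemma hasBanachDensity_of_est (A : Set ℤ) (d C : ℝ)
    (h : ∀ n₁ n₂ : ℤ, 1 ≤ n₁ → n₁ ≤ n₂ →
      |((A ∩ Set.Icc n₁ n₂).ncard : ℝ) - d * ((n₂ : ℝ) - (n₁ : ℝ))| ≤ C) :
    HasBanachDensity A d := by
  intro ε hε
  obtain ⟨N, hN⟩ := exists_nat_gt (C / ε)
  refine ⟨N + 1, fun n₁ n₂ hn₁ hle => ?_⟩
  have hC : 0 ≤ C := le_trans (abs_nonneg _) (h 1 1 le_rfl le_rfl)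
  have hL : (N : ℝ) + 1 ≤ (n₂ : ℝ) - (n₁ : ℝ) := by
    have h2 : ((n₁ : ℝ)) + ((N : ℝ) + 1) ≤ (n₂ : ℝ) := by exact_mod_cast hle
    linarith
  have hLpos : (0 : ℝ) < (n₂ : ℝ) - (n₁ : ℝ) := by
    have : (0 : ℝ) ≤ (N : ℝ) := Nat.cast_nonneg N
    linarith
  have key := h (n₁ : ℤ) (n₂ : ℤ) (by exact_mod_cast hn₁) (by exact_mod_cast (by omega : n₁ ≤ n₂))
  push_cast at key
  have heq : ((A ∩ Set.Icc (n₁ : ℤ) (n₂ : ℤ)).ncard : ℝ) / ((n₂ : ℝ) - (n₁ : ℝ)) - d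
      = (((A ∩ Set.Icc (n₁ : ℤ) (n₂ : ℤ)).ncard : ℝ) - d * ((n₂ : ℝ) - (n₁ : ℝ)))
        / ((n₂ : ℝ) - (n₁ : ℝ)) := by
    field_simp
  rw [heq, abs_div, abs_of_pos hLpos]
  have hCN : C < ε * ((N : ℝ) + 1) := by
    have := (div_lt_iff₀ hε).mp hN
    nlinarith
  have hεL : C < ε * ((n₂ : ℝ) - (n₁ : ℝ)) := by nlinarith
  calc |((A ∩ Set.Icc (n₁ : ℤ) (n₂ : ℤ)).ncard : ℝ) - d * ((n₂ : ℝ) - (n₁ : ℝ))|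
        / ((n₂ : ℝ) - (n₁ : ℝ))
      ≤ C / ((n₂ : ℝ) - (n₁ : ℝ)) := by gcongr
    _ < ε := by rw [div_lt_iff₀ hLpos]; linarith

set_option maxHeartbeats 1000000 in
/-- **Corollary, region ⟨9⟩.** Let `1 < p < q` be integers, `a, b ∈ ℤ` with
`gcd(p,q) ∣ (b − a)`, and write `p = p₁·gcd(p,q)`, `q = q₁·gcd(p,q)` with `p₁ = 1`.
With `(α,β,γ,δ) = (p,a,q,b)`, the densities exist, with
`d_1 = 1 − 1/p − 1/q + 1/(gcd(p,q)·p₁·q₁)`, `d_i = 0` for every finite `i ≥ 2`, and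
`d_∞ = (q₁ − 1)/(p·q₁)`. -/
theorem densities_integer_case_nine (p q : ℕ) (hp : 1 < p) (hpq : p < q) (a b : ℤ)
    (hdvd : ((Nat.gcd p q : ℤ) ∣ (b - a))) (p₁ q₁ : ℕ)
    (hp₁ : p = p₁ * Nat.gcd p q) (hq₁ : q = q₁ * Nat.gcd p q) (hp₁one : p₁ = 1)
    (f : ℤ → ℤ)
    (hf : ∀ k : ℕ, 0 < k →
      f ⌊(p : ℝ) * (k : ℝ) + (a : ℝ)⌋ = ⌊(q : ℝ) * (k : ℝ) + (b : ℝ)⌋) :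
    HasBanachDensity (ASet (p : ℝ) (a : ℝ) (q : ℝ) (b : ℝ) f 1)
        (1 - 1 / (p : ℝ) - 1 / (q : ℝ) +
          1 / ((Nat.gcd p q : ℝ) * (p₁ : ℝ) * (q₁ : ℝ))) ∧
      (∀ i : ℕ, 2 ≤ i → HasBanachDensity (ASet (p : ℝ) (a : ℝ) (q : ℝ) (b : ℝ) f i) 0) ∧
      HasBanachDensity (AInf (p : ℝ) (a : ℝ) (q : ℝ) (b : ℝ) f)
        (((q₁ : ℝ) - 1) / ((p : ℝ) * (q₁ : ℝ))) := by
  -- ## Numeric setup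
  have hg : Nat.gcd p q = p := by rw [hp₁one, one_mul] at hp₁; omega
  have hq' : q = q₁ * p := by rw [hg] at hq₁; exact hq₁
  have hp0 : 0 < p := by omega
  have hq0 : 0 < q := by omega
  have hq₁2 : 2 ≤ q₁ := by
    by_contra h
    push_neg at h
    have : q₁ * p ≤ 1 * p := Nat.mul_le_mul_right p (by omega)
    omega
  obtain ⟨m, hm⟩ : (p : ℤ) ∣ b - a := by rw [hg] at hdvd; exact_mod_cast hdvd
  have hPQ : (q : ℤ) = (q₁ : ℤ) * (p : ℤ) := by exact_mod_cast hq'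
  have hP2 : (2 : ℤ) ≤ (p : ℤ) := by exact_mod_cast hp
  have hQ2 : (2 : ℤ) ≤ (q : ℤ) := by
    have : (p : ℤ) < (q : ℤ) := by exact_mod_cast hpq
    omega
  have hq₁2' : (2 : ℤ) ≤ (q₁ : ℤ) := by exact_mod_cast hq₁2
  have hPz : (0 : ℤ) < (p : ℤ) := by omega
  have hQz : (0 : ℤ) < (q : ℤ) := by omega
  -- ## Beatty set membership
  have hSp : ∀ x : ℤ, x ∈ BeattySet (p : ℝ) (a : ℝ) ↔
      0 < x ∧ (p : ℤ) ∣ x - a ∧ (p : ℤ) + a ≤ x := fun x => mem_beattySet_int hp0 a x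
  have hSq : ∀ x : ℤ, x ∈ BeattySet (q : ℝ) (b : ℝ) ↔
      0 < x ∧ (q : ℤ) ∣ x - b ∧ (q : ℤ) + b ≤ x := fun x => mem_beattySet_int hq0 b x
  have hqdvd : ∀ x : ℤ, (q : ℤ) ∣ x - b → (p : ℤ) ∣ x - a := by
    rintro x ⟨t, ht⟩
    exact ⟨(q₁ : ℤ) * t + m, by linear_combination ht + hm + t * hPQ⟩
  -- ## The map f on the progression
  have hfk : ∀ k : ℤ, 1 ≤ k → f ((p : ℤ) * k + a) = (q : ℤ) * k + b := by
    intro k hk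
    have h0 : 0 < k.toNat := by omega
    have h1 := hf k.toNat h0
    rw [floor_nat_int, floor_nat_int, Int.toNat_of_nonneg (by omega)] at h1
    exact h1
  set K : ℤ := 1 + max 0 (max (-m) (max (-a) (-b))) with hKdef
  have hK1 : 1 ≤ K := by omega
  have hKm : -m < K := by omega
  have hKa : -a < K := by omega
  have hKb : -b < K := by omega
  have hstep : ∀ k : ℤ, K ≤ k →
      f ((p : ℤ) * k + a) = (p : ℤ) * ((q₁ : ℤ) * k + m) + a ∧
        k + 1 ≤ (q₁ : ℤ) * k + m := by
    intro k hk
    have hk1 : 1 ≤ k := le_trans hK1 hk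
    have h2k : 2 * k ≤ (q₁ : ℤ) * k := mul_le_mul_of_nonneg_right hq₁2' (by omega)
    constructor
    · rw [hfk k hk1]
      linear_combination k * hPQ + hm
    · linarith
  have hiter : ∀ (j : ℕ) (k : ℤ), K ≤ k → ∃ k' : ℤ, K ≤ k' ∧
      f^[j] ((p : ℤ) * k + a) = (p : ℤ) * k' + a ∧
      (1 ≤ j → f^[j] ((p : ℤ) * k + a) ∈
        BeattySet (p : ℝ) (a : ℝ) ∩ BeattySet (q : ℝ) (b : ℝ)) := by
    intro j
    induction j with
    | zero => exact fun k hk => ⟨k, hk, rfl, fun h => absurd h (by omega)⟩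
    | succ j ih =>
      intro k hk
      obtain ⟨k', hk', hrep, -⟩ := ih k hk
      obtain ⟨hstep1, hstep2⟩ := hstep k' hk'
      have hk'1 : 1 ≤ k' := le_trans hK1 hk'
      have hkK' : K ≤ (q₁ : ℤ) * k' + m := by omega
      have ht1 : 1 ≤ (q₁ : ℤ) * k' + m := by omega
      have h2t : 2 * ((q₁ : ℤ) * k' + m) ≤ (p : ℤ) * ((q₁ : ℤ) * k' + m) :=
        mul_le_mul_of_nonneg_right hP2 (by omega)
      have hval : (p : ℤ) * ((q₁ : ℤ) * k' + m) + a = (q : ℤ) * k' + b := by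
        linear_combination (-k') * hPQ - hm
      have hpos : 0 < (p : ℤ) * ((q₁ : ℤ) * k' + m) + a := by linarith
      refine ⟨(q₁ : ℤ) * k' + m, hkK', ?_, ?_⟩
      · rw [Function.iterate_succ_apply', hrep, hstep1]
      · intro _
        rw [Function.iterate_succ_apply', hrep, hstep1]
        constructor
        · rw [hSp]
          refine ⟨hpos, ⟨(q₁ : ℤ) * k' + m, by ring⟩, ?_⟩
          have := mul_le_mul_of_nonneg_left ht1 hPz.le
          linarith
        · rw [hSq]
          refine ⟨hpos, ⟨k', by linarith⟩, ?_⟩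
          have := mul_le_mul_of_nonneg_left hk'1 hQz.le
          linarith
  -- ## Thresholds
  set T : ℤ := max ((p : ℤ) * K + a) (max ((p : ℤ) + a) (max ((q : ℤ) + b) 1)) with hTdef
  have hTKa : (p : ℤ) * K + a ≤ T := le_max_left _ _
  have hTpa : (p : ℤ) + a ≤ T := le_trans (le_max_left _ _) (le_max_right _ _)
  have hTqb : (q : ℤ) + b ≤ T :=
    le_trans (le_trans (le_max_left _ _) (le_max_right _ _)) (le_max_right _ _)
  have hT1 : (1 : ℤ) ≤ T :=
    le_trans (le_trans (le_max_right _ _) (le_max_right _ _)) (le_max_right _ _)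
  have hrepx : ∀ x : ℤ, T ≤ x → (p : ℤ) ∣ x - a → ∃ k : ℤ, K ≤ k ∧ x = (p : ℤ) * k + a := by
    rintro x hx ⟨t, ht⟩
    refine ⟨t, ?_, by linarith⟩
    have hx' : (p : ℤ) * K + a ≤ x := le_trans hTKa hx
    have hKt : (p : ℤ) * K ≤ (p : ℤ) * t := by linarith
    exact le_of_mul_le_mul_left hKt hPz
  -- ## Characterizations above the threshold
  have hA1 : ASet (p : ℝ) (a : ℝ) (q : ℝ) (b : ℝ) f 1
      = {x : ℤ | 0 < x} \ (BeattySet (p : ℝ) (a : ℝ) ∪ BeattySet (q : ℝ) (b : ℝ)) :=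
    if_pos rfl
  have hchar1 : ∀ x : ℤ, T ≤ x →
      (x ∈ ASet (p : ℝ) (a : ℝ) (q : ℝ) (b : ℝ) f 1 ↔
        x ∈ {y : ℤ | ¬ (p : ℤ) ∣ y - a}) := by
    intro x hx
    rw [hA1]
    simp only [Set.mem_diff, Set.mem_setOf_eq, Set.mem_union]
    constructor
    · rintro ⟨-, hnot⟩ hd
      exact hnot (Or.inl ((hSp x).mpr ⟨by omega, hd, by omega⟩))
    · intro hd
      refine ⟨by omega, ?_⟩
      rintro (hmem | hmem)
      · exact hd ((hSp x).mp hmem).2.1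
      · exact hd (hqdvd x ((hSq x).mp hmem).2.1)
  have hchar2 : ∀ i : ℕ, 2 ≤ i → ∀ x : ℤ, T ≤ x →
      (x ∈ ASet (p : ℝ) (a : ℝ) (q : ℝ) (b : ℝ) f i ↔ x ∈ (∅ : Set ℤ)) := by
    intro i hi x hx
    have hAi : ASet (p : ℝ) (a : ℝ) (q : ℝ) (b : ℝ) f i
        = (BeattySet (p : ℝ) (a : ℝ) \ BeattySet (q : ℝ) (b : ℝ)) ∩
          {x : ℤ | (∀ j : ℕ, 1 ≤ j → j ≤ i - 2 →
              f^[j] x ∈ BeattySet (p : ℝ) (a : ℝ) ∩ BeattySet (q : ℝ) (b : ℝ)) ∧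
            f^[i - 1] x ∈ BeattySet (q : ℝ) (b : ℝ) \ BeattySet (p : ℝ) (a : ℝ)} :=
      if_neg (by omega)
    rw [hAi]
    simp only [Set.mem_empty_iff_false, iff_false]
    rintro ⟨⟨hxSp, -⟩, -, hlast⟩
    obtain ⟨k, hkK, hxk⟩ := hrepx x hx ((hSp x).mp hxSp).2.1
    obtain ⟨k', -, -, hmem'⟩ := hiter (i - 1) k hkK
    rw [← hxk] at hmem'
    exact hlast.2 (hmem' (by omega)).1
  have hcharInf : ∀ x : ℤ, T ≤ x →
      (x ∈ AInf (p : ℝ) (a : ℝ) (q : ℝ) (b : ℝ) f ↔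
        x ∈ {y : ℤ | (p : ℤ) ∣ y - a ∧ ¬ (q : ℤ) ∣ y - b}) := by
    intro x hx
    constructor
    · rintro ⟨⟨hxSp, hxnSq⟩, -⟩
      exact ⟨((hSp x).mp hxSp).2.1,
        fun hd => hxnSq ((hSq x).mpr ⟨by omega, hd, by omega⟩)⟩
    · rintro ⟨hd, hnd⟩
      obtain ⟨k, hkK, hxk⟩ := hrepx x hx hd
      refine ⟨⟨(hSp x).mpr ⟨by omega, hd, by omega⟩,
        fun hq'' => hnd ((hSq x).mp hq'').2.1⟩, ?_⟩
      intro j hj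
      obtain ⟨k', -, -, hmem'⟩ := hiter j k hkK
      rw [← hxk] at hmem'
      exact hmem' hj
  -- ## Exact counts for the model sets
  have hE1count : ∀ n₁ n₂ : ℤ, n₁ ≤ n₂ →
      (({y : ℤ | ¬ (p : ℤ) ∣ y - a} ∩ Set.Icc n₁ n₂).ncard : ℤ)
        = (n₂ + 1 - n₁) - (({x : ℤ | (p : ℤ) ∣ x - a} ∩ Set.Icc n₁ n₂).ncard : ℤ) := by
    intro n₁ n₂ h
    have hset : {y : ℤ | ¬ (p : ℤ) ∣ y - a} ∩ Set.Icc n₁ n₂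
        = Set.Icc n₁ n₂ \ ({x : ℤ | (p : ℤ) ∣ x - a} ∩ Set.Icc n₁ n₂) := by
      ext x
      simp only [Set.mem_inter_iff, Set.mem_setOf_eq, Set.mem_diff]
      tauto
    rw [hset, Set.ncard_diff Set.inter_subset_right
      ((Set.finite_Icc _ _).inter_of_right _)]
    have hIcc : (Set.Icc n₁ n₂).ncard = (n₂ + 1 - n₁).toNat := by
      rw [← Finset.coe_Icc, Set.ncard_coe_finset, Int.card_Icc]
    have hle : ({x : ℤ | (p : ℤ) ∣ x - a} ∩ Set.Icc n₁ n₂).ncard ≤ (Set.Icc n₁ n₂).ncard :=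
      Set.ncard_le_ncard Set.inter_subset_right (Set.finite_Icc _ _)
    omega
  have hEinfcount : ∀ n₁ n₂ : ℤ, n₁ ≤ n₂ →
      (({y : ℤ | (p : ℤ) ∣ y - a ∧ ¬ (q : ℤ) ∣ y - b} ∩ Set.Icc n₁ n₂).ncard : ℤ)
        = (({x : ℤ | (p : ℤ) ∣ x - a} ∩ Set.Icc n₁ n₂).ncard : ℤ)
          - (({x : ℤ | (q : ℤ) ∣ x - b} ∩ Set.Icc n₁ n₂).ncard : ℤ) := by
    intro n₁ n₂ h
    have hsub : {x : ℤ | (q : ℤ) ∣ x - b} ∩ Set.Icc n₁ n₂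
        ⊆ {x : ℤ | (p : ℤ) ∣ x - a} ∩ Set.Icc n₁ n₂ := by
      rintro x ⟨hx1, hx2⟩
      exact ⟨hqdvd x hx1, hx2⟩
    have hset : {y : ℤ | (p : ℤ) ∣ y - a ∧ ¬ (q : ℤ) ∣ y - b} ∩ Set.Icc n₁ n₂
        = ({x : ℤ | (p : ℤ) ∣ x - a} ∩ Set.Icc n₁ n₂)
          \ ({x : ℤ | (q : ℤ) ∣ x - b} ∩ Set.Icc n₁ n₂) := by
      ext x
      simp only [Set.mem_inter_iff, Set.mem_setOf_eq, Set.mem_diff]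
      tauto
    rw [hset, Set.ncard_diff hsub ((Set.finite_Icc _ _).inter_of_right _)]
    have hle := Set.ncard_le_ncard hsub ((Set.finite_Icc _ _).inter_of_right _)
    omega
  -- ## Assembly
  have hqR : (q : ℝ) = (q₁ : ℝ) * (p : ℝ) := by exact_mod_cast hq'
  have hpR : (0 : ℝ) < (p : ℝ) := by exact_mod_cast hp0
  have hqRz : (0 : ℝ) < (q : ℝ) := by exact_mod_cast hq0
  have hq₁R : (0 : ℝ) < (q₁ : ℝ) := by exact_mod_cast (by omega : 0 < q₁)
  refine ⟨?_, ?_, ?_⟩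
  · -- density of A₁
    have hd1eq : (1 - 1 / (p : ℝ) - 1 / (q : ℝ) +
        1 / ((Nat.gcd p q : ℝ) * (p₁ : ℝ) * (q₁ : ℝ))) = 1 - 1 / (p : ℝ) := by
      have e3 : ((Nat.gcd p q : ℝ) * (p₁ : ℝ) * (q₁ : ℝ)) = (q : ℝ) := by
        rw [hg, hp₁one, hqR]
        push_cast
        ring
      rw [e3]
      ring
    rw [hd1eq]
    apply hasBanachDensity_of_est _ _ (((Set.Icc (1 : ℤ) (T - 1)).ncard : ℝ) + 3)
    intro n₁ n₂ h1 h12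
    have hclose := ncard_close_of_eventually_eq _ _ T hchar1 n₁ n₂ h1
    have hE1 := hE1count n₁ n₂ h12
    have hAP := ap_Icc_est_real p hp0 a n₁ n₂ h12
    have hcloseR : |((ASet (p : ℝ) (a : ℝ) (q : ℝ) (b : ℝ) f 1 ∩ Set.Icc n₁ n₂).ncard : ℝ)
        - (({y : ℤ | ¬ (p : ℤ) ∣ y - a} ∩ Set.Icc n₁ n₂).ncard : ℝ)|
        ≤ ((Set.Icc (1 : ℤ) (T - 1)).ncard : ℝ) := by exact_mod_cast hclose
    have hE1R : (({y : ℤ | ¬ (p : ℤ) ∣ y - a} ∩ Set.Icc n₁ n₂).ncard : ℝ)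
        = ((n₂ : ℝ) + 1 - (n₁ : ℝ))
          - (({x : ℤ | (p : ℤ) ∣ x - a} ∩ Set.Icc n₁ n₂).ncard : ℝ) := by
      exact_mod_cast hE1
    have htri := abs_sub_le
      (((ASet (p : ℝ) (a : ℝ) (q : ℝ) (b : ℝ) f 1 ∩ Set.Icc n₁ n₂).ncard : ℝ))
      ((({y : ℤ | ¬ (p : ℤ) ∣ y - a} ∩ Set.Icc n₁ n₂).ncard : ℝ))
      ((1 - 1 / (p : ℝ)) * ((n₂ : ℝ) - (n₁ : ℝ)))
    have hlast : |(({y : ℤ | ¬ (p : ℤ) ∣ y - a} ∩ Set.Icc n₁ n₂).ncard : ℝ)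
        - (1 - 1 / (p : ℝ)) * ((n₂ : ℝ) - (n₁ : ℝ))| ≤ 3 := by
      rw [hE1R]
      rw [abs_le] at hAP ⊢
      have hexp : (1 - 1 / (p : ℝ)) * ((n₂ : ℝ) - (n₁ : ℝ))
          = ((n₂ : ℝ) - (n₁ : ℝ)) - ((n₂ : ℝ) - (n₁ : ℝ)) / (p : ℝ) := by ring
      constructor
      · linarith [hAP.1, hAP.2]
      · linarith [hAP.1, hAP.2]
    linarith [htri, hcloseR, hlast]
  · -- densities of A_i, i ≥ 2
    intro i hi
    apply hasBanachDensity_of_est _ _ (((Set.Icc (1 : ℤ) (T - 1)).ncard : ℝ))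
    intro n₁ n₂ h1 h12
    have hclose := ncard_close_of_eventually_eq _ (∅ : Set ℤ) T (hchar2 i hi) n₁ n₂ h1
    rw [Set.empty_inter, Set.ncard_empty] at hclose
    have hle : ((ASet (p : ℝ) (a : ℝ) (q : ℝ) (b : ℝ) f i ∩ Set.Icc n₁ n₂).ncard : ℤ)
        ≤ ((Set.Icc (1 : ℤ) (T - 1)).ncard : ℤ) := by
      have h2 := (abs_le.mp hclose).2
      omega
    rw [zero_mul, sub_zero, abs_of_nonneg (Nat.cast_nonneg _)]
    exact_mod_cast hle
  · -- density of A_∞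
    have hdinfeq : ((q₁ : ℝ) - 1) / ((p : ℝ) * (q₁ : ℝ)) = 1 / (p : ℝ) - 1 / (q : ℝ) := by
      have e1 : 1 / (p : ℝ) = (q₁ : ℝ) / ((p : ℝ) * (q₁ : ℝ)) := by
        rw [div_eq_div_iff hpR.ne' (by positivity)]
        ring
      have e2 : 1 / (q : ℝ) = 1 / ((p : ℝ) * (q₁ : ℝ)) := by
        rw [hqR]
        ring
      rw [e1, e2, div_sub_div_same]
    rw [hdinfeq]
    apply hasBanachDensity_of_est _ _ (((Set.Icc (1 : ℤ) (T - 1)).ncard : ℝ) + 4)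
    intro n₁ n₂ h1 h12
    have hclose := ncard_close_of_eventually_eq _ _ T hcharInf n₁ n₂ h1
    have hEinf := hEinfcount n₁ n₂ h12
    have hAPp := ap_Icc_est_real p hp0 a n₁ n₂ h12
    have hAPq := ap_Icc_est_real q hq0 b n₁ n₂ h12
    have hcloseR : |((AInf (p : ℝ) (a : ℝ) (q : ℝ) (b : ℝ) f ∩ Set.Icc n₁ n₂).ncard : ℝ)
        - (({y : ℤ | (p : ℤ) ∣ y - a ∧ ¬ (q : ℤ) ∣ y - b} ∩ Set.Icc n₁ n₂).ncard : ℝ)|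
        ≤ ((Set.Icc (1 : ℤ) (T - 1)).ncard : ℝ) := by exact_mod_cast hclose
    have hER : (({y : ℤ | (p : ℤ) ∣ y - a ∧ ¬ (q : ℤ) ∣ y - b} ∩ Set.Icc n₁ n₂).ncard : ℝ)
        = (({x : ℤ | (p : ℤ) ∣ x - a} ∩ Set.Icc n₁ n₂).ncard : ℝ)
          - (({x : ℤ | (q : ℤ) ∣ x - b} ∩ Set.Icc n₁ n₂).ncard : ℝ) := by
      exact_mod_cast hEinf
    have htri := abs_sub_le
      (((AInf (p : ℝ) (a : ℝ) (q : ℝ) (b : ℝ) f ∩ Set.Icc n₁ n₂).ncard : ℝ))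
      ((({y : ℤ | (p : ℤ) ∣ y - a ∧ ¬ (q : ℤ) ∣ y - b} ∩ Set.Icc n₁ n₂).ncard : ℝ))
      ((1 / (p : ℝ) - 1 / (q : ℝ)) * ((n₂ : ℝ) - (n₁ : ℝ)))
    have hlast : |(({y : ℤ | (p : ℤ) ∣ y - a ∧ ¬ (q : ℤ) ∣ y - b} ∩ Set.Icc n₁ n₂).ncard : ℝ)
        - (1 / (p : ℝ) - 1 / (q : ℝ)) * ((n₂ : ℝ) - (n₁ : ℝ))| ≤ 4 := by
      rw [hER]
      rw [abs_le] at hAPp hAPq ⊢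
      have hexp : (1 / (p : ℝ) - 1 / (q : ℝ)) * ((n₂ : ℝ) - (n₁ : ℝ))
          = ((n₂ : ℝ) - (n₁ : ℝ)) / (p : ℝ) - ((n₂ : ℝ) - (n₁ : ℝ)) / (q : ℝ) := by ring
      constructor
      · linarith [hAPp.1, hAPp.2, hAPq.1, hAPq.2]
      · linarith [hAPp.1, hAPp.2, hAPq.1, hAPq.2]
    linarith [htri, hcloseR, hlast]
end
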